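/- For every character α of the symmetric hypergroup, there exists exactly one α-mean on ℓ∞(ℕ₀) if and only if α ≠ 1; i.e. the symmetric hypergroup ℕ₀ is α-amenable with a unique α-mean precisely for the nontrivial characters α. -/

import Mathlib

open Filter Topology

noncomputable section

/-- `Tf` is the translate by `n` of `f` in the symmetric hypergroup on `ℕ₀`
with parameters `b`, `c`:  `(T_n f)(k) = f(max n k)` for `k ≠ n`,
`T_0 f = f`, and `(T_n f)(n) = Σ_{k<n} (c_k/c_n) f(k) + (1 - b_n) f(n)`
for `n ≥ 1`. -/
def IsSymTranslate (b c : ℕ → ℝ) (n : ℕ)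
    (f Tf : BoundedContinuousFunction ℕ ℝ) : Prop :=
  (∀ k : ℕ, k ≠ n → Tf k = f (max n k)) ∧
  (n = 0 → Tf 0 = f 0) ∧
  (1 ≤ n → Tf n = (∑ k ∈ Finset.range n, (c k / c n) * f k) + (1 - b n) * f n)

/-- A character of the symmetric hypergroup: a bounded function `α : ℕ → ℝ`,
not identically `0`, with `α(max n k) = α(n)α(k)` for `n ≠ k` and
`Σ_{k<n} (c_k/c_n) α(k) + (1 - b_n) α(n) = α(n)²` for `n ≥ 1`. -/
def IsSymCharacter (b c : ℕ → ℝ) (α : BoundedContinuousFunction ℕ ℝ) : Prop :=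
  α ≠ 0 ∧
  (∀ n k : ℕ, n ≠ k → α (max n k) = α n * α k) ∧
  ∀ n : ℕ, 1 ≤ n →
    (∑ k ∈ Finset.range n, (c k / c n) * α k) + (1 - b n) * α n = (α n) ^ 2

/-- `m` is an `α`-mean on `ℓ∞(ℕ₀)` for the symmetric hypergroup:
`m(α) = 1` and `m(T_n f) = α(n) m(f)` for all `n` and bounded `f`. -/
def IsSymMean (b c : ℕ → ℝ) (α : BoundedContinuousFunction ℕ ℝ)
    (m : BoundedContinuousFunction ℕ ℝ →L[ℝ] ℝ) : Prop :=
  m α = 1 ∧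
    ∀ (n : ℕ) (f Tf : BoundedContinuousFunction ℕ ℝ),
      IsSymTranslate b c n f Tf → m Tf = α n * m f

/-!
For `α = 1`, limits along two free ultrafilters, one containing the even and one the odd
numbers, are two different `1`-means, because `T_n f` and `f` differ at finitely many points only.

For `α ≠ 1`, multiplicativity forces `α` to be `1` on `[0, N)`, `-b N` at `N` and `0` beyond,
with `N ≥ 1`. The Haar integral of `α f` is then `α`-covariant, and normalised it is an `α`-mean.
The difference `d` of two `α`-means is covariant with `d α = 0`. Since `T_j δ₀ = δ_j / c_j`,
`d δ_j = c_j α_j d δ₀`, so `0 = d α = (∑ c_k α_k²) d δ₀` and `d` kills all finitely supported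
functions. As `T_N f - f` is finitely supported and `α N ≠ 1`, `d f = α N d f` gives `d f = 0`.
-/

open BoundedContinuousFunction

theorem Ultrafilter.exists_le_cofinite_mem {α : Type*} {s : Set α} (hs : s.Infinite) :
    ∃ U : Ultrafilter α, (U : Filter α) ≤ cofinite ∧ s ∈ U := by
  have := hs.cofinite_inf_principal_neBot
  obtain ⟨U, hU⟩ := Ultrafilter.exists_le (cofinite ⊓ 𝓟 s)
  exact ⟨U, hU.trans inf_le_left, le_principal_iff.mp (hU.trans inf_le_right)⟩

namespace BoundedContinuousFunction

variable {X : Type*} [TopologicalSpace X]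

theorem exists_norm_le_tendsto_ultrafilter (U : Ultrafilter X) (f : X →ᵇ ℝ) :
    ∃ a, ‖a‖ ≤ ‖f‖ ∧ Tendsto f U (𝓝 a) := by
  have hU : (U.map f : Filter ℝ) ≤ 𝓟 (Metric.closedBall 0 ‖f‖) := by
    rw [le_principal_iff, Ultrafilter.mem_coe, Ultrafilter.mem_map]
    exact univ_mem' fun x => by simpa using f.norm_coe_le_norm x
  obtain ⟨a, ha, hle⟩ := isCompact_iff_ultrafilter_le_nhds.mp (isCompact_closedBall 0 ‖f‖) _ hU
  exact ⟨a, by simpa using ha, hle⟩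

theorem tendsto_limUnder_ultrafilter (U : Ultrafilter X) (f : X →ᵇ ℝ) :
    Tendsto f U (𝓝 (limUnder (U : Filter X) f)) :=
  tendsto_nhds_limUnder ((exists_norm_le_tendsto_ultrafilter U f).imp fun _ ha => ha.2)

def ultrafilterLim (U : Ultrafilter X) : (X →ᵇ ℝ) →L[ℝ] ℝ :=
  LinearMap.mkContinuous
    { toFun := fun f => limUnder (U : Filter X) f
      map_add' := fun f g =>
        ((tendsto_limUnder_ultrafilter U f).add (tendsto_limUnder_ultrafilter U g)).limUnder_eq
      map_smul' := fun r f => ((tendsto_limUnder_ultrafilter U f).const_mul r).limUnder_eq }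
    1 fun f => by
      obtain ⟨a, ha, hf⟩ := exists_norm_le_tendsto_ultrafilter U f
      simpa [hf.limUnder_eq] using ha

theorem ultrafilterLim_eq {U : Ultrafilter X} {f : X →ᵇ ℝ} {a : ℝ}
    (h : Tendsto f U (𝓝 a)) : ultrafilterLim U f = a :=
  h.limUnder_eq

end BoundedContinuousFunction

namespace IsSymTranslate

variable {b c : ℕ → ℝ} {n k : ℕ} {f Tf : ℕ →ᵇ ℝ}

theorem apply_of_lt (h : IsSymTranslate b c n f Tf) (hk : k < n) :
    Tf k = f n := by
  rw [h.1 k hk.ne, max_eq_left hk.le]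

theorem apply_of_gt (h : IsSymTranslate b c n f Tf) (hk : n < k) :
    Tf k = f k := by
  rw [h.1 k hk.ne', max_eq_right hk.le]

theorem eq_of_zero (h : IsSymTranslate b c 0 f Tf) : Tf = f := by
  ext k
  rcases k.eq_zero_or_pos with rfl | hk
  · exact h.2.1 rfl
  · exact h.apply_of_gt hk

end IsSymTranslate

theorem isSymMean_one_ultrafilterLim (b c : ℕ → ℝ) {U : Ultrafilter ℕ}
    (hU : (U : Filter ℕ) ≤ cofinite) : IsSymMean b c 1 (ultrafilterLim U) := by
  refine ⟨ultrafilterLim_eq (tendsto_const_nhds (x := (1 : ℝ))), ?_⟩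
  intro n f Tf hT
  have hn : ∀ᶠ k in cofinite, n < k := Nat.cofinite_eq_atTop ▸ eventually_gt_atTop n
  have hfTf : (f : ℕ → ℝ) =ᶠ[U] Tf :=
    (hn.filter_mono hU).mono fun k hk => (hT.apply_of_gt hk).symm
  rw [coe_one, Pi.one_apply, one_mul]
  exact ultrafilterLim_eq ((tendsto_limUnder_ultrafilter U f).congr' hfTf)

theorem not_existsUnique_isSymMean_one (b c : ℕ → ℝ) : ¬∃! m, IsSymMean b c 1 m := by
  rintro ⟨m, -, hm_unique⟩
  obtain ⟨U, hU, hU_even⟩ := Ultrafilter.exists_le_cofinite_mem (s := {k | Even k})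
    (Set.infinite_of_forall_exists_gt fun a => ⟨2 * a + 2, ⟨a + 1, by ring⟩, by omega⟩)
  obtain ⟨V, hV, hV_odd⟩ := Ultrafilter.exists_le_cofinite_mem (s := {k | Odd k})
    (Set.infinite_of_forall_exists_gt fun a => ⟨2 * a + 1, odd_two_mul_add_one a, by omega⟩)
  let sign : ℕ →ᵇ ℝ := ofNormedAddCommGroupDiscrete (fun k => (-1) ^ k) 1 (by simp)
  have hU_sign : ultrafilterLim U sign = 1 :=
    ultrafilterLim_eq (tendsto_const_nhds.congr' (mem_of_superset hU_even
      fun k (hk : Even k) => hk.neg_one_pow.symm))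
  have hV_sign : ultrafilterLim V sign = -1 :=
    ultrafilterLim_eq (tendsto_const_nhds.congr' (mem_of_superset hV_odd
      fun k (hk : Odd k) => hk.neg_one_pow.symm))
  have hUV : ultrafilterLim U = ultrafilterLim V :=
    (hm_unique _ (isSymMean_one_ultrafilterLim b c hU)).trans
      (hm_unique _ (isSymMean_one_ultrafilterLim b c hV)).symm
  have := hU_sign.symm.trans ((congrArg (· sign) hUV).trans hV_sign)
  norm_num at this

section HaarWeights

variable {b c : ℕ → ℝ}

theorem symHaar_pos (hb : ∀ n, 1 ≤ n → 0 < b n) (hc0 : c 0 = 1)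
    (hcrec : ∀ n, 1 ≤ n → c n = 1 / b n * ∑ k ∈ Finset.range n, c k) (n : ℕ) : 0 < c n := by
  induction n using Nat.strong_induction_on with
  | _ n ih =>
    rcases n.eq_zero_or_pos with rfl | hn
    · simp [hc0]
    · have hsum : 0 < ∑ k ∈ Finset.range n, c k :=
        Finset.sum_pos (fun k hk => ih k (Finset.mem_range.1 hk)) ⟨0, Finset.mem_range.2 hn⟩
      rw [hcrec n hn]
      have := hb n hn
      positivity

theorem symHaar_sum_range (hb : ∀ n, 1 ≤ n → 0 < b n)
    (hcrec : ∀ n, 1 ≤ n → c n = 1 / b n * ∑ k ∈ Finset.range n, c k) {n : ℕ} (hn : 1 ≤ n) :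
    ∑ k ∈ Finset.range n, c k = b n * c n := by
  rw [hcrec n hn]
  field_simp [(hb n hn).ne']

end HaarWeights

namespace IsSymCharacter

variable {b c : ℕ → ℝ} {α : ℕ →ᵇ ℝ} {j k : ℕ}

theorem apply_eq_one_of_lt (hα : IsSymCharacter b c α) (hk : k < j) (hj : α j ≠ 0) :
    α k = 1 := by
  have h := hα.2.1 k j hk.ne
  rw [max_eq_right hk.le] at h
  exact mul_right_cancel₀ hj (by rw [← h, one_mul])

theorem apply_eq_zero_of_lt (hα : IsSymCharacter b c α) (hj : α j = 0) (hk : j < k) :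
    α k = 0 := by
  rw [← max_eq_right hk.le, hα.2.1 j k hk.ne, hj, zero_mul]

theorem apply_zero (hα : IsSymCharacter b c α) (hc : ∀ n, 0 < c n) : α 0 = 1 := by
  by_contra h0
  have hpos : ∀ n, 1 ≤ n → α n = 0 := fun n hn => by
    by_contra hn'
    exact h0 (hα.apply_eq_one_of_lt hn hn')
  have h1 := hα.2.2 1 le_rfl
  rw [Finset.sum_range_one, hpos 1 le_rfl] at h1
  have hα0 : α 0 = 0 := by
    simpa [(hc 0).ne', (hc 1).ne'] using h1
  refine hα.1 (ext fun n => ?_)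
  rcases n.eq_zero_or_pos with rfl | hn
  · exact hα0
  · exact hpos n hn

theorem exists_apply_eq_zero (hα : IsSymCharacter b c α) (hne : α ≠ 1) : ∃ n, α n = 0 := by
  by_contra! h
  exact hne (ext fun k => hα.apply_eq_one_of_lt k.lt_succ_self (h (k + 1)))

theorem eq_step (hα : IsSymCharacter b c α) (hc : ∀ n, 0 < c n)
    (hcs : ∀ n, 1 ≤ n → ∑ k ∈ Finset.range n, c k = b n * c n) (hne : α ≠ 1) :
    ∃ N, 1 ≤ N ∧ (∀ k < N, α k = 1) ∧ α N = -b N ∧ ∀ k, N < k → α k = 0 := by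
  classical
  have hzero := hα.exists_apply_eq_zero hne
  obtain ⟨N, hN⟩ : ∃ N, Nat.find hzero = N + 1 := Nat.exists_eq_add_one.mpr <|
    Nat.pos_of_ne_zero fun h => by simpa [h, hα.apply_zero hc] using Nat.find_spec hzero
  have hαN : α N ≠ 0 := Nat.find_min hzero (by omega)
  have hlt : ∀ k < N, α k = 1 := fun k hk => hα.apply_eq_one_of_lt hk hαN
  have hgt : ∀ k, N < k → α k = 0 := fun k hk => by
    rcases (show N + 1 ≤ k by omega).eq_or_lt with rfl | hk'
    · exact hN ▸ Nat.find_spec hzero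
    · exact hα.apply_eq_zero_of_lt (hN ▸ Nat.find_spec hzero) hk'
  have hsum : ∑ k ∈ Finset.range N, c k + c N * α N = 0 := by
    have hq := hα.2.2 (N + 1) (by omega)
    rw [hgt (N + 1) N.lt_succ_self, Finset.sum_range_succ, Finset.sum_congr rfl
      fun k hk => by rw [hlt k (Finset.mem_range.1 hk), mul_one]] at hq
    rw [← Finset.sum_div] at hq
    field_simp [(hc (N + 1)).ne'] at hq
    linarith
  have hN1 : 1 ≤ N := by
    by_contra h
    have hN0 : N = 0 := by omega
    subst hN0
    simp [hα.apply_zero hc, (hc 0).ne'] at hsum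
  refine ⟨N, hN1, hlt, ?_, hgt⟩
  rw [hcs N hN1] at hsum
  exact mul_left_cancel₀ (hc N).ne' (by linarith)

end IsSymCharacter

def IsSymCovariant (b c : ℕ → ℝ) (α : ℕ →ᵇ ℝ) (φ : (ℕ →ᵇ ℝ) →L[ℝ] ℝ) : Prop :=
  ∀ (n : ℕ) (f Tf : ℕ →ᵇ ℝ), IsSymTranslate b c n f Tf → φ Tf = α n * φ f

variable {b c : ℕ → ℝ} {α : ℕ →ᵇ ℝ}

theorem IsSymCovariant.isSymMean_inv_smul {φ : (ℕ →ᵇ ℝ) →L[ℝ] ℝ}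
    (hφ : IsSymCovariant b c α φ) (hφα : φ α ≠ 0) : IsSymMean b c α ((φ α)⁻¹ • φ) := by
  refine ⟨by simp [hφα], fun n f Tf hT => ?_⟩
  simp only [_root_.smul_apply, smul_eq_mul, hφ n f Tf hT]
  ring

theorem IsSymMean.sub_isSymCovariant {m m' : (ℕ →ᵇ ℝ) →L[ℝ] ℝ} (hm : IsSymMean b c α m)
    (hm' : IsSymMean b c α m') : IsSymCovariant b c α (m - m') ∧ (m - m') α = 0 := by
  refine ⟨fun n f Tf hT => ?_, by simp [hm.1, hm'.1]⟩
  simp only [_root_.sub_apply, hm.2 n f Tf hT, hm'.2 n f Tf hT]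
  ring

theorem IsSymTranslate.sum_range_mul_eq {n : ℕ} {f Tf : ℕ →ᵇ ℝ} (hT : IsSymTranslate b c n f Tf)
    (hn : 1 ≤ n) (hcn : c n ≠ 0) (hcs : ∑ k ∈ Finset.range n, c k = b n * c n) :
    ∀ L, n < L → ∑ k ∈ Finset.range L, c k * Tf k = ∑ k ∈ Finset.range L, c k * f k := by
  refine Nat.le_induction ?_ fun L hL ih => ?_
  · have hlow : ∑ k ∈ Finset.range n, c k * Tf k = b n * c n * f n := by
      rw [Finset.sum_congr rfl fun k hk => by rw [hT.apply_of_lt (Finset.mem_range.1 hk)],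
        ← Finset.sum_mul, hcs]
    rw [Finset.sum_range_succ, Finset.sum_range_succ, hlow, hT.2.2 hn]
    simp_rw [div_mul_eq_mul_div, ← Finset.sum_div]
    field_simp
    ring
  · rw [Finset.sum_range_succ, Finset.sum_range_succ, ih, hT.apply_of_gt (by omega)]

/-- `f ↦ ∑ k, c k * α k * f k`, the Haar integral of `α * f`, for the character `α` of
`IsSymCharacter.eq_step`. -/
def stepFunctional (b c : ℕ → ℝ) (N : ℕ) : (ℕ →ᵇ ℝ) →L[ℝ] ℝ :=
  ∑ k ∈ Finset.range N, c k • evalCLM ℝ k - (b N * c N) • evalCLM ℝ N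

theorem stepFunctional_apply (N : ℕ) (f : ℕ →ᵇ ℝ) :
    stepFunctional b c N f = ∑ k ∈ Finset.range N, c k * f k - b N * c N * f N := by
  simp [stepFunctional]

theorem isSymCovariant_stepFunctional (hc : ∀ n, 0 < c n)
    (hcs : ∀ n, 1 ≤ n → ∑ k ∈ Finset.range n, c k = b n * c n) {N : ℕ} (hN : 1 ≤ N)
    (hlt : ∀ k < N, α k = 1) (hαN : α N = -b N) (hgt : ∀ k, N < k → α k = 0) :
    IsSymCovariant b c α (stepFunctional b c N) := by
  intro n f Tf hT
  simp only [stepFunctional_apply]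
  rcases n.eq_zero_or_pos with rfl | hn
  · rw [hT.eq_of_zero, hlt 0 hN, one_mul]
  have hbelow : ∀ m, m ≤ n → ∑ k ∈ Finset.range m, c k * Tf k =
      (∑ k ∈ Finset.range m, c k) * f n := fun m hm => by
    rw [Finset.sum_mul]
    exact Finset.sum_congr rfl fun k hk => by
      rw [hT.apply_of_lt (lt_of_lt_of_le (Finset.mem_range.1 hk) hm)]
  rcases lt_trichotomy n N with h | rfl | h
  · rw [hT.sum_range_mul_eq hn (hc n).ne' (hcs n hn) N h, hT.apply_of_gt h, hlt n h, one_mul]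
  · rw [hbelow n le_rfl, hcs n hn, hT.2.2 hn, hαN]
    simp_rw [div_mul_eq_mul_div, ← Finset.sum_div]
    field_simp [(hc n).ne']
    ring
  · rw [hbelow N h.le, hcs N hN, hT.apply_of_lt h, hgt n h]
    ring

def kroneckerDelta (j : ℕ) : ℕ →ᵇ ℝ :=
  ofNormedAddCommGroupDiscrete (fun k => if k = j then 1 else 0) 1 fun k => by
    split_ifs <;> simp

theorem sum_smul_kroneckerDelta_apply (a : ℕ → ℝ) (L j : ℕ) :
    (∑ k ∈ Finset.range L, a k • kroneckerDelta k) j = if j < L then a j else 0 := by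
  simp [kroneckerDelta, BoundedContinuousFunction.sum_apply]

theorem eq_sum_smul_kroneckerDelta {f : ℕ →ᵇ ℝ} {L : ℕ} (hf : ∀ k, L ≤ k → f k = 0) :
    f = ∑ k ∈ Finset.range L, f k • kroneckerDelta k := by
  ext j
  rw [sum_smul_kroneckerDelta_apply]
  split_ifs with hj
  · rfl
  · exact hf j (not_lt.mp hj)

theorem isSymTranslate_kroneckerDelta_zero (hc0 : c 0 = 1) {j : ℕ} (hj : 1 ≤ j) :
    IsSymTranslate b c j (kroneckerDelta 0) ((c j)⁻¹ • kroneckerDelta j) := by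
  refine ⟨fun k hk => ?_, fun h => by omega, fun _ => ?_⟩
  · simp [kroneckerDelta, hk]
    omega
  · simp [kroneckerDelta, Finset.sum_ite_eq', hc0, (show j ≠ 0 by omega)]

theorem exists_isSymTranslate_add_sum_smul_kroneckerDelta {n : ℕ} (hn : 1 ≤ n) (f : ℕ →ᵇ ℝ) :
    ∃ a : ℕ → ℝ, IsSymTranslate b c n f
      (f + ∑ k ∈ Finset.range (n + 1), a k • kroneckerDelta k) := by
  let Tf : ℕ → ℝ := fun k =>
    if k < n then f n else ∑ j ∈ Finset.range n, c j / c n * f j + (1 - b n) * f n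
  refine ⟨fun k => Tf k - f k, fun k hk => ?_, by omega, fun _ => ?_⟩ <;>
    rw [coe_add, Pi.add_apply, sum_smul_kroneckerDelta_apply]
  · rcases hk.lt_or_gt with h | h
    · simp [Tf, h, (show k < n + 1 by omega), max_eq_left h.le]
    · simp [(show ¬k < n + 1 by omega), max_eq_right h.le]
  · simp [Tf]

theorem IsSymCovariant.eq_zero {d : (ℕ →ᵇ ℝ) →L[ℝ] ℝ} (hd : IsSymCovariant b c α d)
    (hdα : d α = 0) (hc0 : c 0 = 1) (hc : ∀ n, 0 < c n) (hα0 : α 0 = 1) {L : ℕ}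
    (hα_supp : ∀ k, L < k → α k = 0) {n : ℕ} (hn : 1 ≤ n) (hαn : α n ≠ 1) : d = 0 := by
  have hdelta : ∀ j, d (kroneckerDelta j) = c j * α j * d (kroneckerDelta 0) := fun j => by
    rcases j.eq_zero_or_pos with rfl | hj
    · rw [hc0, hα0, one_mul, one_mul]
    · have := hd j _ _ (isSymTranslate_kroneckerDelta_zero hc0 hj)
      rw [map_smul, smul_eq_mul] at this
      field_simp [(hc j).ne'] at this ⊢
      linarith
  have hK : 0 < ∑ k ∈ Finset.range (L + 1), c k * α k * α k := by
    refine Finset.sum_pos' (fun k _ => ?_) ⟨0, by simp, by simp [hc0, hα0]⟩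
    rw [mul_assoc]
    exact mul_nonneg (hc k).le (mul_self_nonneg _)
  have hdelta0 : d (kroneckerDelta 0) = 0 := by
    rw [eq_sum_smul_kroneckerDelta (L := L + 1) fun k hk => hα_supp k hk, map_sum] at hdα
    simp only [map_smul, smul_eq_mul] at hdα
    have hKd : (∑ k ∈ Finset.range (L + 1), c k * α k * α k) * d (kroneckerDelta 0) = 0 := by
      rw [Finset.sum_mul, ← hdα]
      exact Finset.sum_congr rfl fun k _ => by rw [hdelta k]; ring
    exact (mul_eq_zero.mp hKd).resolve_left hK.ne'
  have hvanish : ∀ (a : ℕ → ℝ) (L : ℕ), d (∑ k ∈ Finset.range L, a k • kroneckerDelta k) = 0 :=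
    fun a L => by
      simp only [map_sum, map_smul, smul_eq_mul]
      exact Finset.sum_eq_zero fun k _ => by rw [hdelta, hdelta0, mul_zero, mul_zero]
  ext f
  obtain ⟨a, hT⟩ := exists_isSymTranslate_add_sum_smul_kroneckerDelta (b := b) (c := c) hn f
  have hfix := hd n _ _ hT
  rw [map_add, hvanish, add_zero] at hfix
  have h : (1 - α n) * d f = 0 := by linear_combination hfix
  rw [zero_apply]
  exact (mul_eq_zero.mp h).resolve_left (sub_ne_zero.mpr hαn.symm)

theorem existsUnique_isSymMean (hb : ∀ n, 1 ≤ n → 0 < b n) (hc0 : c 0 = 1)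
    (hcrec : ∀ n, 1 ≤ n → c n = 1 / b n * ∑ k ∈ Finset.range n, c k)
    (hα : IsSymCharacter b c α) (hne : α ≠ 1) : ∃! m, IsSymMean b c α m := by
  have hc := symHaar_pos hb hc0 hcrec
  have hcs := fun n (hn : 1 ≤ n) => symHaar_sum_range hb hcrec hn
  obtain ⟨N, hN, hlt, hαN, hgt⟩ := hα.eq_step hc hcs hne
  have hφ := isSymCovariant_stepFunctional hc hcs hN hlt hαN hgt
  have hφα : stepFunctional b c N α ≠ 0 := by
    rw [stepFunctional_apply, Finset.sum_congr rfl fun k hk => by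
      rw [hlt k (Finset.mem_range.1 hk), mul_one], hcs N hN, hαN,
      show b N * c N - b N * c N * -b N = b N * c N * (1 + b N) by ring]
    have := hb N hN
    have := hc N
    positivity
  have hmean := hφ.isSymMean_inv_smul hφα
  refine ⟨_, hmean, fun m hm => sub_eq_zero.mp ?_⟩
  obtain ⟨hd, hdα⟩ := hm.sub_isSymCovariant hmean
  exact hd.eq_zero hdα hc0 hc (hlt 0 hN) hgt hN
    (by rw [hαN]; linarith [hb N hN])

theorem stmt16    (b c : ℕ → ℝ)
    (hb : ∀ n : ℕ, 1 ≤ n → b n ∈ Set.Ioc (0 : ℝ) 1)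
    (hc0 : c 0 = 1)
    (hcrec : ∀ n : ℕ, 1 ≤ n → c n = (1 / b n) * ∑ k ∈ Finset.range n, c k)
    (α : BoundedContinuousFunction ℕ ℝ)
    (hα : IsSymCharacter b c α) :
    (∃! m : BoundedContinuousFunction ℕ ℝ →L[ℝ] ℝ, IsSymMean b c α m) ↔ α ≠ 1 := by
  refine ⟨?_, existsUnique_isSymMean (fun n hn => (hb n hn).1) hc0 hcrec hα⟩
  rintro h rfl
  exact not_existsUnique_isSymMean_one b c h
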